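/- Let 1 ≤ p_0 < p_1 ≤ ∞. Then the n-th Bernstein number of the inclusion I : ℓ^{p_0}(N) ↪ ℓ^{p_1}(N) equals n^{1/p_1 − 1/p_0}. In particular, the inclusion is finitely strictly singular. -/

import Mathlib

/-!
Every `n`-dimensional space `V` of null sequences contains a vector `x` with `|x k| ≤ 1` for all
`k` and `|x k| = 1` for `n` indices `k`. Indeed, the unit cube of `V` is compact by Tychonoff, so
it has an extreme point `x`; if `x` had fewer than `n` peak coordinates, some nonzero `y ∈ V`
would vanish on all of them, and `x ± ε y` would stay in the cube for small `ε`.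
For such an `x`, `‖x‖_{p₁} ≤ ‖x‖_{p₀} ^ (p₀ / p₁)` and `‖x‖_{p₀} ≥ n ^ (1 / p₀)`, which bounds the
ratio `‖x‖_{p₁} / ‖x‖_{p₀}` by `n ^ (1 / p₁ - 1 / p₀)`. The matching lower bound is Hölder's
inequality on the span of the first `n` unit vectors.
-/

open MeasureTheory Set ENNReal Filter

/-- The `ℓ^p` norm of a family of extended nonnegative reals (with `p = ∞` giving the sup). -/
noncomputable def elpE {ι : Type*} (p : ℝ≥0∞) (x : ι → ℝ≥0∞) : ℝ≥0∞ :=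
  if p = ∞ then ⨆ k, x k else (∑' k, x k ^ p.toReal) ^ (1 / p.toReal)

/-- The `ℓ^p` (quasi-)norm of a real-valued family. -/
noncomputable def elp {ι : Type*} (p : ℝ≥0∞) (x : ι → ℝ) : ℝ≥0∞ :=
  elpE p fun k => (‖x k‖₊ : ℝ≥0∞)

/-- The `n`-th Bernstein number of the identity viewed as a map from the space with
(quasi-)norm `N` to the space with (quasi-)norm `M`. -/
noncomputable def bern {E : Type*} [AddCommGroup E] [Module ℝ E]
    (N M : E → ℝ≥0∞) (n : ℕ) : ℝ≥0∞ :=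
  ⨆ V : {V : Submodule ℝ E // Module.finrank ℝ V = n ∧ ∀ x ∈ V, N x ≠ ∞},
    ⨅ x : {x : E // x ∈ V.1 ∧ N x = 1}, M x.1

open Topology

section Peaks

variable {ι : Type*}

theorem eventually_forall_abs_add_mul_le_one {x y : ι → ℝ}
    (hx : Tendsto x cofinite (𝓝 0)) (hy : Tendsto y cofinite (𝓝 0))
    (hx₁ : ∀ k, |x k| ≤ 1) (hxy : ∀ k, |x k| = 1 → y k = 0) :
    ∀ᶠ ε in 𝓝 (0 : ℝ), ∀ k, |x k + ε * y k| ≤ 1 := by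
  have habs : ∀ {z : ι → ℝ}, Tendsto z cofinite (𝓝 0) → Tendsto (|z ·|) cofinite (𝓝 0) :=
    fun hz => by simpa using hz.abs
  obtain ⟨C, hC⟩ := (habs hy).bddAbove_range_of_cofinite
  have hF : {k | ¬|x k| ≤ 1 / 2}.Finite :=
    eventually_cofinite.1 <| (habs hx).eventually (ge_mem_nhds (by norm_num))
  have hlarge : ∀ᶠ ε in 𝓝 (0 : ℝ), ∀ k ∈ {k | ¬|x k| ≤ 1 / 2}, |x k + ε * y k| ≤ 1 := by
    refine (eventually_all_finite hF).2 fun k _ => ?_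
    rcases (hx₁ k).lt_or_eq with hlt | heq
    · have : Tendsto (fun ε : ℝ => |x k + ε * y k|) (𝓝 0) (𝓝 |x k|) := by
        simpa using (show Continuous fun ε : ℝ => |x k + ε * y k| by fun_prop).tendsto 0
      exact this.eventually (ge_mem_nhds hlt)
    · simp [hxy k heq, hx₁ k]
  have hsmall : ∀ᶠ ε in 𝓝 (0 : ℝ), |ε| * C ≤ 1 / 2 := by
    have : Tendsto (fun ε : ℝ => |ε| * C) (𝓝 0) (𝓝 0) := by
      simpa using (show Continuous fun ε : ℝ => |ε| * C by fun_prop).tendsto 0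
    exact this.eventually (ge_mem_nhds (by norm_num))
  filter_upwards [hlarge, hsmall] with ε hε hεC k
  by_cases hk : |x k| ≤ 1 / 2
  · calc |x k + ε * y k| ≤ |x k| + |ε| * |y k| := (abs_add_le _ _).trans_eq (by rw [abs_mul])
      _ ≤ 1 / 2 + |ε| * C := by gcongr; exact hC (mem_range_self k)
      _ ≤ 1 := by linarith
  · exact hε k hk

theorem Submodule.exists_ne_zero_forall_mem_eq_zero {K : Type*} [Field K]
    (V : Submodule K (ι → K)) [FiniteDimensional K V] (s : Finset ι)
    (hs : s.card < Module.finrank K V) : ∃ y ∈ V, y ≠ 0 ∧ ∀ k ∈ s, y k = 0 := by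
  by_contra! h
  let restrict : V →ₗ[K] (s → K) := (LinearMap.pi fun k : s => LinearMap.proj k.1) ∘ₗ V.subtype
  have hinj : Function.Injective restrict := by
    refine (injective_iff_map_eq_zero restrict).2 fun y hy => ?_
    by_contra hy0
    obtain ⟨k, hk, hyk⟩ := h y y.2 (by simpa using hy0)
    exact hyk (congrFun hy ⟨k, hk⟩)
  have := LinearMap.finrank_le_finrank_of_injective hinj
  rw [Module.finrank_fintype_fun_eq_card, Fintype.card_coe] at this
  omega

theorem Submodule.exists_abs_le_one_and_card_abs_eq_one (V : Submodule ℝ (ι → ℝ))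
    [FiniteDimensional ℝ V] (hV : ∀ x ∈ V, Tendsto x cofinite (𝓝 0)) :
    ∃ x ∈ V, (∀ k, |x k| ≤ 1) ∧
      ∃ s : Finset ι, s.card = Module.finrank ℝ V ∧ ∀ k ∈ s, |x k| = 1 := by
  set B := (V : Set (ι → ℝ)) ∩ univ.pi fun _ => Icc (-1 : ℝ) 1
  have hB : IsCompact B :=
    (isCompact_univ_pi fun _ => isCompact_Icc).inter_left V.closed_of_finiteDimensional
  have hmemB : ∀ x ∈ V, (∀ k, |x k| ≤ 1) → x ∈ B := fun x hx h =>
    ⟨hx, fun k _ => abs_le.1 (h k)⟩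
  obtain ⟨x, hxB⟩ := hB.extremePoints_nonempty ⟨0, hmemB 0 V.zero_mem (by simp)⟩
  have hx₁ : ∀ k, |x k| ≤ 1 := fun k => abs_le.2 (hxB.1.2 k (mem_univ k))
  refine ⟨x, hxB.1.1, hx₁, ?_⟩
  by_contra hfew
  set A := {k | |x k| = 1}
  have hA : A.Finite := by
    by_contra hA
    obtain ⟨s, hsA, hs⟩ := Set.Infinite.exists_subset_card_eq hA (Module.finrank ℝ V)
    exact hfew ⟨s, hs, fun k hk => hsA hk⟩
  have hAcard : hA.toFinset.card < Module.finrank ℝ V := by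
    by_contra! hle
    obtain ⟨s, hsA, hs⟩ := Finset.exists_subset_card_eq hle
    exact hfew ⟨s, hs, fun k hk => hA.mem_toFinset.1 (hsA hk)⟩
  obtain ⟨y, hyV, hy0, hyA⟩ := V.exists_ne_zero_forall_mem_eq_zero _ hAcard
  obtain ⟨δ, hδ, hperturb⟩ := Metric.eventually_nhds_iff.1 <|
    eventually_forall_abs_add_mul_le_one (hV x hxB.1.1) (hV y hyV) hx₁
      fun k hk => hyA k (hA.mem_toFinset.2 hk)
  have hmem : ∀ ε : ℝ, |ε| < δ → x + ε • y ∈ B := fun ε hε =>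
    hmemB _ (V.add_mem hxB.1.1 (V.smul_mem ε hyV)) (by simpa using hperturb (by simpa using hε))
  have hε : |δ / 2| < δ := by rw [abs_of_pos (by positivity)]; linarith
  have heq := hxB.2 (hmem _ hε) (hmem (-(δ / 2)) (by rwa [abs_neg]))
    (by simpa [neg_smul, ← sub_eq_add_neg] using mem_openSegment_add_sub (𝕜 := ℝ) x ((δ / 2) • y))
  have : (δ / 2) • y = 0 := by simpa using heq
  exact hy0 ((smul_eq_zero.1 this).resolve_left (by positivity))

end Peaks

theorem ENNReal.rpow_le_rpow_sub_one_mul {m u : ℝ≥0∞} (hm₀ : m ≠ 0) (hm : m ≠ ∞) (hmu : m ≤ u)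
    {θ : ℝ} (hθ : θ ≤ 1) : u ^ θ ≤ m ^ (θ - 1) * u := by
  have hu₀ : u ≠ 0 := (pos_of_ne_zero hm₀ |>.trans_le hmu).ne'
  rcases eq_or_ne u ∞ with rfl | hu
  · rw [mul_top (by simp [rpow_eq_zero_iff, hm₀, hm])]
    exact le_top
  calc u ^ θ = u ^ (θ - 1) * u := by
        conv_lhs => rw [← sub_add_cancel θ 1, rpow_add _ _ hu₀ hu, rpow_one]
    _ ≤ m ^ (θ - 1) * u := by
        rw [← neg_sub, rpow_neg, rpow_neg]
        gcongr

section Elp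

variable {ι : Type*} {p p₀ p₁ : ℝ≥0∞}

theorem elpE_top (a : ι → ℝ≥0∞) : elpE ∞ a = ⨆ k, a k := by simp [elpE]

theorem elpE_of_ne_top (hp : p ≠ ∞) (a : ι → ℝ≥0∞) :
    elpE p a = (∑' k, a k ^ p.toReal) ^ (1 / p.toReal) := by simp [elpE, hp]

theorem elpE_const_mul (hp : p ≠ 0) (c : ℝ≥0∞) (a : ι → ℝ≥0∞) :
    elpE p (fun k => c * a k) = c * elpE p a := by
  rcases eq_or_ne p ∞ with rfl | hp'
  · simp [elpE_top, mul_iSup]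
  have hq : 0 < p.toReal := toReal_pos hp hp'
  simp only [elpE_of_ne_top hp', mul_rpow_of_nonneg _ _ hq.le, ENNReal.tsum_mul_left]
  rw [mul_rpow_of_nonneg _ _ (by positivity), ← rpow_mul, mul_one_div_cancel hq.ne', rpow_one]

theorem elp_smul (hp : p ≠ 0) (r : ℝ) (x : ι → ℝ) : elp p (r • x) = ‖r‖₊ * elp p x := by
  simp only [elp, Pi.smul_apply, smul_eq_mul, nnnorm_mul, coe_mul]
  exact elpE_const_mul hp _ _

theorem tendsto_cofinite_zero_of_elp_ne_top (hp : p ≠ 0) (hp' : p ≠ ∞) {x : ι → ℝ}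
    (hx : elp p x ≠ ∞) : Tendsto x cofinite (𝓝 0) := by
  have hq : 0 < p.toReal := toReal_pos hp hp'
  rw [elp, elpE_of_ne_top hp'] at hx
  have hpow := ENNReal.tendsto_cofinite_zero_of_tsum_ne_top
    (fun h => hx (by rw [h, top_rpow_of_pos (by positivity)]))
  have := ((ENNReal.continuous_rpow_const (y := 1 / p.toReal)).tendsto 0).comp hpow
  simp only [Function.comp_def, ← rpow_mul, mul_one_div_cancel hq.ne', rpow_one,
    zero_rpow_of_pos (one_div_pos.2 hq)] at this
  rw [tendsto_zero_iff_norm_tendsto_zero]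
  simpa [Function.comp_def] using (ENNReal.tendsto_toReal zero_ne_top).comp this

theorem one_div_toReal_lt_one_div_toReal (hp₀ : p₀ ≠ 0) (hp : p₀ < p₁) :
    1 / p₁.toReal < 1 / p₀.toReal := by
  have hq₀ : 0 < p₀.toReal := toReal_pos hp₀ hp.ne_top
  rcases eq_or_ne p₁ ∞ with rfl | hp₁
  · simpa using hq₀
  · exact one_div_lt_one_div_of_lt hq₀ (toReal_strict_mono hp₁ hp)

theorem elpE_le_elpE_rpow (hp₀ : p₀ ≠ 0) (hp : p₀ ≤ p₁) {a : ι → ℝ≥0∞} (ha : ∀ k, a k ≤ 1) :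
    elpE p₁ a ≤ elpE p₀ a ^ (p₀.toReal / p₁.toReal) := by
  rcases eq_or_ne p₁ ∞ with rfl | hp₁
  · simpa [elpE_top] using ha
  have hp₀' : p₀ ≠ ∞ := (hp.trans_lt hp₁.lt_top).ne
  have hq₀ : 0 < p₀.toReal := toReal_pos hp₀ hp₀'
  have hexp : 1 / p₀.toReal * (p₀.toReal / p₁.toReal) = 1 / p₁.toReal := by field_simp
  rw [elpE_of_ne_top hp₁, elpE_of_ne_top hp₀', ← rpow_mul, hexp]
  exact rpow_le_rpow (ENNReal.tsum_le_tsum fun k =>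
    rpow_le_rpow_of_exponent_ge (ha k) (toReal_mono hp₁ hp)) (by positivity)

theorem elpE_le_rpow_mul_elpE (hp₀ : p₀ ≠ 0) (hp : p₀ < p₁) {a : ι → ℝ≥0∞} (ha : ∀ k, a k ≤ 1)
    {n : ℕ} (hn : n ≠ 0) (hna : (n : ℝ≥0∞) ≤ ∑' k, a k ^ p₀.toReal) :
    elpE p₁ a ≤ (n : ℝ≥0∞) ^ (1 / p₁.toReal - 1 / p₀.toReal) * elpE p₀ a := by
  have hp₀' : p₀ ≠ ∞ := hp.ne_top
  have hq₀ : 0 < p₀.toReal := toReal_pos hp₀ hp₀'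
  have hq : p₁.toReal = 0 ∨ p₀.toReal < p₁.toReal := by
    rcases eq_or_ne p₁ ∞ with rfl | hp₁
    · simp
    · exact .inr (toReal_strict_mono hp₁ hp)
  have hθ : p₀.toReal / p₁.toReal ≤ 1 := by
    rcases hq with h | h
    · simp [h]
    · exact div_le_one_of_le₀ h.le (hq₀.trans h).le
  have hexp : 1 / p₀.toReal * (p₀.toReal / p₁.toReal - 1) = 1 / p₁.toReal - 1 / p₀.toReal := by
    rcases hq with h | h
    · simp [h]
    · field_simp
  have hm : (n : ℝ≥0∞) ^ (1 / p₀.toReal) ≤ elpE p₀ a := by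
    rw [elpE_of_ne_top hp₀']
    gcongr
  calc elpE p₁ a ≤ elpE p₀ a ^ (p₀.toReal / p₁.toReal) := elpE_le_elpE_rpow hp₀ hp.le ha
    _ ≤ ((n : ℝ≥0∞) ^ (1 / p₀.toReal)) ^ (p₀.toReal / p₁.toReal - 1) * elpE p₀ a :=
        rpow_le_rpow_sub_one_mul (by simp [rpow_eq_zero_iff, hn])
          (rpow_ne_top_of_nonneg (by positivity) (natCast_ne_top n)) hm hθ
    _ = (n : ℝ≥0∞) ^ (1 / p₁.toReal - 1 / p₀.toReal) * elpE p₀ a := by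
        rw [← rpow_mul, hexp]

theorem elpE_le_card_rpow_mul_elpE (hp₀ : p₀ ≠ 0) (hp : p₀ < p₁) {a : ι → ℝ≥0∞} (s : Finset ι)
    (ha : ∀ k ∉ s, a k = 0) :
    elpE p₀ a ≤ (s.card : ℝ≥0∞) ^ (1 / p₀.toReal - 1 / p₁.toReal) * elpE p₁ a := by
  have hp₀' : p₀ ≠ ∞ := hp.ne_top
  have hq₀ : 0 < p₀.toReal := toReal_pos hp₀ hp₀'
  have hsum : ∀ q : ℝ, 0 < q → ∑' k, a k ^ q = ∑ k ∈ s, a k ^ q := fun q hq =>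
    tsum_eq_sum fun k hk => by rw [ha k hk, zero_rpow_of_pos hq]
  rw [elpE_of_ne_top hp₀', hsum _ hq₀]
  rcases eq_or_ne p₁ ∞ with rfl | hp₁
  · calc (∑ k ∈ s, a k ^ p₀.toReal) ^ (1 / p₀.toReal)
        ≤ ((s.card : ℝ≥0∞) * (⨆ k, a k) ^ p₀.toReal) ^ (1 / p₀.toReal) := by
          rw [← nsmul_eq_mul, ← Finset.sum_const]
          gcongr with k
          exact le_iSup a k
      _ = (s.card : ℝ≥0∞) ^ (1 / p₀.toReal - 1 / (∞ : ℝ≥0∞).toReal) * elpE ∞ a := by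
          rw [mul_rpow_of_nonneg _ _ (by positivity), ← rpow_mul, mul_one_div_cancel hq₀.ne',
            rpow_one, elpE_top]
          simp
  have hq : p₀.toReal < p₁.toReal := toReal_strict_mono hp₁ hp
  have hq₁ : 0 < p₁.toReal := hq₀.trans hq
  have hHolder := ENNReal.rpow_sum_le_const_mul_sum_rpow s (fun k => a k ^ p₀.toReal)
    (p := p₁.toReal / p₀.toReal) ((one_le_div₀ hq₀).2 hq.le)
  simp only [← rpow_mul, mul_div_cancel₀ _ hq₀.ne'] at hHolder
  calc (∑ k ∈ s, a k ^ p₀.toReal) ^ (1 / p₀.toReal)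
      = ((∑ k ∈ s, a k ^ p₀.toReal) ^ (p₁.toReal / p₀.toReal)) ^ (1 / p₁.toReal) := by
        rw [← rpow_mul]
        congr 1
        field_simp
    _ ≤ ((s.card : ℝ≥0∞) ^ (p₁.toReal / p₀.toReal - 1) * ∑ k ∈ s, a k ^ p₁.toReal) ^
          (1 / p₁.toReal) := by gcongr
    _ = (s.card : ℝ≥0∞) ^ (1 / p₀.toReal - 1 / p₁.toReal) * elpE p₁ a := by
        rw [mul_rpow_of_nonneg _ _ (by positivity), ← rpow_mul, elpE_of_ne_top hp₁, hsum _ hq₁]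
        congr 2
        field_simp

end Elp

section Bernstein

variable {ι : Type*} {p₀ p₁ : ℝ≥0∞}

theorem bern_elp_le (hp₀ : p₀ ≠ 0) (hp : p₀ < p₁) {n : ℕ} (hn : n ≠ 0) :
    bern (elp p₀ (ι := ι)) (elp p₁) n ≤ (n : ℝ≥0∞) ^ (1 / p₁.toReal - 1 / p₀.toReal) := by
  refine iSup_le fun ⟨V, hVn, hVfin⟩ => ?_
  have : FiniteDimensional ℝ V := Module.finite_of_finrank_pos (hVn ▸ Nat.pos_of_ne_zero hn)
  obtain ⟨x, hxV, hx₁, s, hs, hsx⟩ := V.exists_abs_le_one_and_card_abs_eq_one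
    fun x hx => tendsto_cofinite_zero_of_elp_ne_top hp₀ hp.ne_top (hVfin x hx)
  have hle : ∀ k, (‖x k‖₊ : ℝ≥0∞) ≤ 1 := fun k => by
    simpa [← NNReal.coe_le_one] using hx₁ k
  have hone : ∀ k ∈ s, (‖x k‖₊ : ℝ≥0∞) = 1 := fun k hk => by
    simpa [← NNReal.coe_eq_one] using hsx k hk
  have hpeak : (n : ℝ≥0∞) ≤ ∑' k, (‖x k‖₊ : ℝ≥0∞) ^ p₀.toReal := by
    calc (n : ℝ≥0∞) = ∑ k ∈ s, (‖x k‖₊ : ℝ≥0∞) ^ p₀.toReal := by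
          rw [Finset.sum_congr rfl fun k hk => by rw [hone k hk, one_rpow]]
          simp [← hVn, ← hs]
      _ ≤ _ := ENNReal.sum_le_tsum s
  have hbound : elp p₁ x ≤ (n : ℝ≥0∞) ^ (1 / p₁.toReal - 1 / p₀.toReal) * elp p₀ x :=
    elpE_le_rpow_mul_elpE hp₀ hp hle hn hpeak
  have hx₀ : elp p₀ x ≠ 0 := by
    rw [elp, elpE_of_ne_top hp.ne_top]
    exact (rpow_pos_of_nonneg ((Nat.cast_pos.2 (Nat.pos_of_ne_zero hn)).trans_le hpeak)
      (by positivity)).ne'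
  set r := ((elp p₀ x)⁻¹).toReal
  have hr : (‖r‖₊ : ℝ≥0∞) * elp p₀ x = 1 := by
    rw [← enorm_eq_nnnorm, ← ofReal_norm, Real.norm_of_nonneg toReal_nonneg,
      ofReal_toReal (inv_ne_top.2 hx₀), ENNReal.inv_mul_cancel hx₀ (hVfin x hxV)]
  refine iInf_le_of_le ⟨r • x, V.smul_mem r hxV, by rw [elp_smul hp₀, hr]⟩ ?_
  calc elp p₁ (r • x) = ‖r‖₊ * elp p₁ x := elp_smul (hp₀.bot_lt.trans hp).ne' r x
    _ ≤ ‖r‖₊ * ((n : ℝ≥0∞) ^ (1 / p₁.toReal - 1 / p₀.toReal) * elp p₀ x) := by gcongr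
    _ = (n : ℝ≥0∞) ^ (1 / p₁.toReal - 1 / p₀.toReal) := by rw [mul_left_comm, hr, mul_one]

theorem le_bern_elp (hp₀ : p₀ ≠ 0) (hp : p₀ < p₁) {s : Finset ι} (hs : s.Nonempty) :
    (s.card : ℝ≥0∞) ^ (1 / p₁.toReal - 1 / p₀.toReal) ≤
      bern (elp p₀ (ι := ι)) (elp p₁) s.card := by
  have hq₀ : 0 < p₀.toReal := toReal_pos hp₀ hp.ne_top
  set V := LinearMap.range (Function.ExtendByZero.linearMap ℝ ((↑) : s → ι))
  have hV : ∀ x ∈ V, ∀ k ∉ s, x k = 0 := by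
    rintro _ ⟨f, rfl⟩ k hk
    exact Function.extend_apply' _ _ _ fun ⟨i, hi⟩ => hk (hi ▸ i.2)
  have hVn : Module.finrank ℝ V = s.card := by
    rw [LinearMap.finrank_range_of_inj, Module.finrank_fintype_fun_eq_card, Fintype.card_coe]
    intro f g hfg
    funext i
    simpa [Subtype.val_injective.extend_apply] using congrFun hfg i
  have hVfin : ∀ x ∈ V, elp p₀ x ≠ ∞ := by
    intro x hx
    rw [elp, elpE_of_ne_top hp.ne_top,
      tsum_eq_sum (s := s) fun k hk => by simp [hV x hx k hk, zero_rpow_of_pos hq₀]]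
    exact rpow_ne_top_of_nonneg (by positivity)
      (sum_ne_top.2 fun k _ => rpow_ne_top_of_nonneg hq₀.le coe_ne_top)
  refine le_iSup_of_le ⟨V, hVn, hVfin⟩ (le_iInf fun ⟨x, hxV, hx⟩ => ?_)
  have hHolder : 1 ≤ (s.card : ℝ≥0∞) ^ (1 / p₀.toReal - 1 / p₁.toReal) * elp p₁ x :=
    hx ▸ elpE_le_card_rpow_mul_elpE hp₀ hp s fun k hk => by simp [hV x hxV k hk]
  rw [← neg_sub, rpow_neg, ENNReal.inv_le_iff_le_mul _ fun _ h => by simp [h] at hHolder]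
  · exact hHolder
  · simp [rpow_eq_zero_iff, hs.ne_empty]

end Bernstein

theorem bernstein_lp_inclusion (p₀ p₁ : ℝ≥0∞) (hp₀ : 1 ≤ p₀) (hp : p₀ < p₁) :
    (∀ n : ℕ, 1 ≤ n →
      bern (elp p₀ (ι := ℕ)) (elp p₁ (ι := ℕ)) n =
        (n : ℝ≥0∞) ^ (1 / p₁.toReal - 1 / p₀.toReal)) ∧
    Tendsto (bern (elp p₀ (ι := ℕ)) (elp p₁ (ι := ℕ))) atTop (nhds 0) := by
  have hp₀' : p₀ ≠ 0 := (zero_lt_one.trans_le hp₀).ne'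
  have hbern : ∀ n : ℕ, 1 ≤ n →
      bern (elp p₀ (ι := ℕ)) (elp p₁ (ι := ℕ)) n =
        (n : ℝ≥0∞) ^ (1 / p₁.toReal - 1 / p₀.toReal) := fun n hn =>
    le_antisymm (bern_elp_le hp₀' hp (by omega))
      (by simpa using le_bern_elp hp₀' hp (Finset.nonempty_range_iff.2 (by omega)))
  refine ⟨hbern, Tendsto.congr' (eventually_atTop.2 ⟨1, fun n hn => (hbern n hn).symm⟩) ?_⟩
  have hexp : 1 / p₁.toReal - 1 / p₀.toReal < 0 :=
    sub_neg.2 (one_div_toReal_lt_one_div_toReal hp₀' hp)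
  have hlim := ((continuous_rpow_const (y := 1 / p₁.toReal - 1 / p₀.toReal)).tendsto ∞).comp
    tendsto_nat_nhds_top
  rwa [top_rpow_of_neg hexp] at hlim
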